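/- Let f be a q-linearized polynomial, α_1,...,α_n an F_q-basis of F_{q^n}, r_i = f(α_i) + e_i with rank(e) = t, and let V ⊆ F_q^n be the kernel of b ↦ Σ b_i e_i. If linearized polynomials P_1, P_2 satisfy P_1(α_i) = P_2(r_i) for all i, then P_1 - P_2 ∘ f vanishes on the (n-t)-dimensional F_q-subspace W = {Σ b_i α_i : b ∈ V} of F_{q^n}. -/

import Mathlib

/-!
Every `q`-linearized polynomial is `𝔽_q`-linear, so for `b` with `∑ bᵢ eᵢ = 0` and `w = ∑ bᵢ αᵢ`,
`P₁(w) = ∑ bᵢ P₁(αᵢ) = ∑ bᵢ P₂(rᵢ) = P₂(∑ bᵢ f(αᵢ) + ∑ bᵢ eᵢ) = P₂(f(w))`.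
The space of such `b` is the kernel of `b ↦ ∑ bᵢ eᵢ`, of dimension `n - t` by rank–nullity,
and `b ↦ ∑ bᵢ αᵢ` maps it isomorphically onto `W`.
-/

open Module Submodule FiniteField

namespace FiniteField

variable {K R : Type*} [Field K] [Fintype K] [CommRing R] [Algebra K R]

/-- The `q`-linearized polynomial `∑ⱼ cⱼ X^(q^j)`, `q = #K`, as a `K`-linear endomorphism. -/
def linearizedMap {d : ℕ} (c : Fin d → R) : R →ₗ[K] R :=
  ∑ j, c j • (frobeniusAlgHom K R ^ (j : ℕ)).toLinearMap

theorem linearizedMap_apply {d : ℕ} (c : Fin d → R) (x : R) :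
    linearizedMap (K := K) c x = ∑ j, c j * x ^ Fintype.card K ^ (j : ℕ) := by
  simp [linearizedMap, coe_frobeniusAlgHom, pow_iterate]

end FiniteField

section KernelImage

variable {K M N : Type*} [Field K] [AddCommGroup M] [Module K M] [AddCommGroup N] [Module K N]
  {ι : Type*} [Fintype ι]

variable (K) in
def kernelImage (α : ι → M) (e : ι → N) : Submodule K M :=
  (LinearMap.ker (Fintype.linearCombination K e)).map (Fintype.linearCombination K α)

theorem mem_kernelImage_iff {α : ι → M} {e : ι → N} {w : M} :
    w ∈ kernelImage K α e ↔ ∃ b : ι → K, ∑ i, b i • e i = 0 ∧ w = ∑ i, b i • α i := by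
  simp [kernelImage, Fintype.linearCombination_apply, eq_comm]

theorem finrank_ker_fintypeLinearCombination (e : ι → N) :
    finrank K (LinearMap.ker (Fintype.linearCombination K e))
      = Fintype.card ι - finrank K (span K (Set.range e)) := by
  have h := LinearMap.finrank_range_add_finrank_ker (Fintype.linearCombination K e)
  rw [Fintype.range_linearCombination, Module.finrank_fintype_fun_eq_card] at h
  omega

theorem finrank_kernelImage {α : ι → M} (hα : LinearIndependent K α) (e : ι → N) :
    finrank K (kernelImage K α e) = Fintype.card ι - finrank K (span K (Set.range e)) := by
  rw [kernelImage, ← (Submodule.equivMapOfInjective _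
    (linearIndependent_iff_injective_fintypeLinearCombination.mp hα) _).finrank_eq,
    finrank_ker_fintypeLinearCombination]

theorem eq_comp_of_mem_kernelImage {M' P : Type*} [AddCommGroup M'] [Module K M']
    [AddCommGroup P] [Module K P] (P₁ : M →ₗ[K] P) (P₂ : M' →ₗ[K] P) (f : M →ₗ[K] M')
    {α : ι → M} {e : ι → M'} (hP : ∀ i, P₁ (α i) = P₂ (f (α i) + e i))
    {w : M} (hw : w ∈ kernelImage K α e) : P₁ w = P₂ (f w) := by
  obtain ⟨b, hb, rfl⟩ := mem_kernelImage_iff.mp hw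
  calc P₁ (∑ i, b i • α i) = P₂ (∑ i, b i • f (α i) + ∑ i, b i • e i) := by
        simp [map_sum, hP, Finset.sum_add_distrib]
    _ = P₂ (f (∑ i, b i • α i)) := by simp [hb, map_sum]

end KernelImage

theorem stmt_13_general (q n : ℕ)
    (F L : Type) [Field F] [Fintype F] [Field L] [Algebra F L]
    (hF : Fintype.card F = q)
    (B : Module.Basis (Fin n) F L)
    (m : ℕ) (fc : Fin (m + 1) → L)
    (e : Fin n → L) (t : ℕ)
    (ht : Module.finrank F (Submodule.span F (Set.range e)) = t)
    (r : Fin n → L)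
    (hr : ∀ i : Fin n, r i = (∑ j : Fin (m + 1), fc j * (B i) ^ q ^ (j : ℕ)) + e i)
    (d₁ d₂ : ℕ) (P₁ : Fin (d₁ + 1) → L) (P₂ : Fin (d₂ + 1) → L)
    (hP : ∀ i : Fin n,
      (∑ j : Fin (d₁ + 1), P₁ j * (B i) ^ q ^ (j : ℕ))
        = ∑ j : Fin (d₂ + 1), P₂ j * (r i) ^ q ^ (j : ℕ)) :
    ∃ W : Submodule F L,
      Module.finrank F W = n - t ∧
      (W : Set L) = {w : L | ∃ b : Fin n → F,
        (∑ i : Fin n, b i • e i) = 0 ∧ w = ∑ i : Fin n, b i • (B i : L)} ∧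
      ∀ w ∈ W,
        (∑ j : Fin (d₁ + 1), P₁ j * w ^ q ^ (j : ℕ))
          - (∑ j : Fin (d₂ + 1), P₂ j *
              ((∑ l : Fin (m + 1), fc l * w ^ q ^ (l : ℕ))) ^ q ^ (j : ℕ)) = 0 := by
  subst hF
  refine ⟨kernelImage F B e, ?_, ?_, fun w hw => ?_⟩
  · rw [finrank_kernelImage B.linearIndependent, ht, Fintype.card_fin]
  · exact Set.ext fun _ => mem_kernelImage_iff
  · have hP' : ∀ i, linearizedMap (K := F) P₁ (B i)
        = linearizedMap (K := F) P₂ (linearizedMap (K := F) fc (B i) + e i) := by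
      simpa only [linearizedMap_apply, ← hr] using hP
    have := eq_comp_of_mem_kernelImage _ _ _ hP' hw
    rwa [linearizedMap_apply, linearizedMap_apply, linearizedMap_apply, ← sub_eq_zero] at this

/-- with r_i = f(α_i) + e_i, rank(e) = t, and V the kernel of
b ↦ Σ b_i e_i, if P_1(α_i) = P_2(r_i) for all i then P_1 - P_2 ∘ f vanishes on
the (n-t)-dimensional subspace W = {Σ b_i α_i : b ∈ V} of F_{q^n}. -/
theorem stmt_13 (q n : ℕ) (hq : IsPrimePow q) (hn : 0 < n)
    (F L : Type) [Field F] [Fintype F] [Field L] [Fintype L] [Algebra F L]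
    (hF : Fintype.card F = q) (hL : Fintype.card L = q ^ n)
    (B : Module.Basis (Fin n) F L)
    (m : ℕ) (fc : Fin (m + 1) → L)
    (e : Fin n → L) (t : ℕ)
    (ht : Module.finrank F (Submodule.span F (Set.range e)) = t)
    (r : Fin n → L)
    (hr : ∀ i : Fin n, r i = (∑ j : Fin (m + 1), fc j * (B i) ^ q ^ (j : ℕ)) + e i)
    (d₁ d₂ : ℕ) (P₁ : Fin (d₁ + 1) → L) (P₂ : Fin (d₂ + 1) → L)
    (hP : ∀ i : Fin n,
      (∑ j : Fin (d₁ + 1), P₁ j * (B i) ^ q ^ (j : ℕ))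
        = ∑ j : Fin (d₂ + 1), P₂ j * (r i) ^ q ^ (j : ℕ)) :
    ∃ W : Submodule F L,
      Module.finrank F W = n - t ∧
      (W : Set L) = {w : L | ∃ b : Fin n → F,
        (∑ i : Fin n, b i • e i) = 0 ∧ w = ∑ i : Fin n, b i • (B i : L)} ∧
      ∀ w ∈ W,
        (∑ j : Fin (d₁ + 1), P₁ j * w ^ q ^ (j : ℕ))
          - (∑ j : Fin (d₂ + 1), P₂ j *
              ((∑ l : Fin (m + 1), fc l * w ^ q ^ (l : ℕ))) ^ q ^ (j : ℕ)) = 0 :=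
  stmt_13_general q n F L hF B m fc e t ht r hr d₁ d₂ P₁ P₂ hP
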